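/- arXiv:2604.18818 — 6 statements merged into one kernel-verified Lean document; each statement's English description precedes it below -/
import Mathlib

section
/- Under the same hypotheses (μ0 C¹, μ0(0)=0, increasing, concave; α0, D, X0in > 0), the function ξ(X0) = D(X0in − α0·X0)/μ0(X0) is convex on (0, X0in/α0), i.e., ξ''(X0) ≥ 0 there (strictly positive if μ0'(X0)>0). -/
/-!
Write `ξ = L / μ` with `L` affine of slope `c = -D α0 ≤ 0`. Differentiating `ξ μ = L` once and
twice gives `ξ' μ = c - ξ μ'` and `ξ'' μ = -ξ μ'' - 2 μ' ξ'`. Where `L, μ, μ' > 0` the first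
identity makes `ξ' < 0`; with `μ'' ≤ 0` the second then makes `ξ'' > 0`, so `ξ` is strictly
convex. Positivity of `μ` on `(0, ∞)` comes from `μ 0 = 0` and `μ' > 0`.
-/

open Set Filter Topology

lemma pos_of_map_zero_of_deriv_pos {f : ℝ → ℝ} (hf : ContinuousOn f (Ici 0)) (h0 : f 0 = 0)
    (hf' : ∀ x ∈ Ioi (0 : ℝ), 0 < deriv f x) {x : ℝ} (hx : 0 < x) : 0 < f x := by
  have hmono : StrictMonoOn f (Ici 0) :=
    strictMonoOn_of_deriv_pos (convex_Ici 0) hf (by rwa [interior_Ici])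
  simpa [h0] using hmono self_mem_Ici hx.le hx

section AffineDiv

variable {L μ : ℝ → ℝ} {c x : ℝ}

lemma hasDerivAt_div_of_hasDerivAt_const (hL : HasDerivAt L c x) (hμ : DifferentiableAt ℝ μ x)
    (hx : μ x ≠ 0) :
    HasDerivAt (fun y => L y / μ y) ((c - L x / μ x * deriv μ x) / μ x) x :=
  (hL.div hμ.hasDerivAt hx).congr_deriv (by field_simp)

lemma deriv_div_eventuallyEq (hL : ∀ y, HasDerivAt L c y) (hμ : Differentiable ℝ μ)
    (hx : μ x ≠ 0) :
    deriv (fun y => L y / μ y) =ᶠ[𝓝 x] fun y => (c - L y / μ y * deriv μ y) / μ y := by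
  filter_upwards [hμ.continuous.continuousAt.eventually_ne hx] with y hy
  exact (hasDerivAt_div_of_hasDerivAt_const (hL y) (hμ y) hy).deriv

lemma deriv_deriv_div_of_hasDerivAt_const (hL : ∀ y, HasDerivAt L c y) (hμ : Differentiable ℝ μ)
    (hμ' : DifferentiableAt ℝ (deriv μ) x) (hx : μ x ≠ 0) :
    deriv (deriv fun y => L y / μ y) x =
      -(L x / μ x * deriv (deriv μ) x + 2 * deriv μ x * deriv (fun y => L y / μ y) x) / μ x := by
  have hξ := hasDerivAt_div_of_hasDerivAt_const (hL x) (hμ x) hx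
  have hξ' : HasDerivAt (fun y => (c - L y / μ y * deriv μ y) / μ y) _ x :=
    ((hasDerivAt_const x c).sub (hξ.mul hμ'.hasDerivAt)).div (hμ x).hasDerivAt hx
  rw [(deriv_div_eventuallyEq hL hμ hx).deriv_eq, hξ'.deriv, hξ.deriv]
  simp only [Pi.sub_apply, Pi.mul_apply]
  field_simp
  ring

lemma deriv_deriv_div_pos_of_concave (hL : ∀ y, HasDerivAt L c y) (hμ : Differentiable ℝ μ)
    (hμ' : DifferentiableAt ℝ (deriv μ) x) (hc : c ≤ 0) (hLx : 0 < L x) (hμx : 0 < μ x)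
    (hμ'x : 0 < deriv μ x) (hμ''x : deriv (deriv μ) x ≤ 0) :
    0 < deriv (deriv fun y => L y / μ y) x := by
  have hξ : 0 < L x / μ x := div_pos hLx hμx
  have hξ' : deriv (fun y => L y / μ y) x < 0 := by
    rw [(hasDerivAt_div_of_hasDerivAt_const (hL x) (hμ x) hμx.ne').deriv]
    exact div_neg_of_neg_of_pos (by nlinarith [mul_pos hξ hμ'x]) hμx
  rw [deriv_deriv_div_of_hasDerivAt_const hL hμ hμ' hμx.ne']
  refine div_pos (neg_pos.2 ?_) hμx
  nlinarith [mul_nonpos_of_nonneg_of_nonpos hξ.le hμ''x, mul_neg_of_pos_of_neg hμ'x hξ']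

end AffineDiv

theorem xi_convexOn_general
    (μ0 : ℝ → ℝ) (α0 D X0in : ℝ)
    (hα0 : 0 < α0) (hD : 0 < D)
    (hC2 : ContDiff ℝ 2 μ0) (hμ00 : μ0 0 = 0)
    (hμ0' : ∀ x ∈ Ici (0:ℝ), 0 < deriv μ0 x)
    (hμ0'' : ∀ x ∈ Ici (0:ℝ), deriv (deriv μ0) x ≤ 0) :
    ConvexOn ℝ (Ioo 0 (X0in / α0))
      (fun X0 : ℝ => D * (X0in - α0 * X0) / μ0 X0) ∧
    ∀ x ∈ Ioo (0:ℝ) (X0in / α0),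
      0 < deriv μ0 x →
      0 < deriv (deriv (fun X0 : ℝ => D * (X0in - α0 * X0) / μ0 X0)) x := by
  have hμ : Differentiable ℝ μ0 := hC2.differentiable two_ne_zero
  have hμ_pos : ∀ x, 0 < x → 0 < μ0 x :=
    fun x => pos_of_map_zero_of_deriv_pos hμ.continuous.continuousOn hμ00
      fun y hy => hμ0' y (mem_Ioi.1 hy).le
  have hL : ∀ y, HasDerivAt (fun y => D * (X0in - α0 * y)) (-(D * α0)) y := fun y => by
    simpa using (((hasDerivAt_id y).const_mul α0).const_sub X0in).const_mul D
  have hξ'' : ∀ x ∈ Ioo 0 (X0in / α0),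
      0 < deriv (deriv (fun X0 : ℝ => D * (X0in - α0 * X0) / μ0 X0)) x := fun x hx =>
    deriv_deriv_div_pos_of_concave hL hμ (hC2.differentiable_deriv_two x)
      (neg_nonpos.2 (mul_pos hD hα0).le)
      (mul_pos hD (by linarith [(lt_div_iff₀ hα0).1 hx.2])) (hμ_pos x hx.1)
      (hμ0' x hx.1.le) (hμ0'' x hx.1.le)
  refine ⟨(strictConvexOn_of_deriv2_pos' (convex_Ioo _ _) ?_ hξ'').convexOn,
    fun x hx _ => hξ'' x hx⟩
  exact ContinuousOn.div (by fun_prop) hμ.continuous.continuousOn fun y hy => (hμ_pos y hy.1).ne'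

theorem xi_convexOn
    (μ0 : ℝ → ℝ) (α0 D X0in : ℝ)
    (hα0 : 0 < α0) (hD : 0 < D) (hX0in : 0 < X0in)
    (hC2 : ContDiff ℝ 2 μ0) (hμ00 : μ0 0 = 0)
    (hμ0' : ∀ x ∈ Ici (0:ℝ), 0 < deriv μ0 x)
    (hμ0'' : ∀ x ∈ Ici (0:ℝ), deriv (deriv μ0) x ≤ 0) :
    ConvexOn ℝ (Ioo 0 (X0in / α0))
      (fun X0 : ℝ => D * (X0in - α0 * X0) / μ0 X0) ∧
    ∀ x ∈ Ioo (0:ℝ) (X0in / α0),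
      0 < deriv μ0 x →
      0 < deriv (deriv (fun X0 : ℝ => D * (X0in - α0 * X0) / μ0 X0)) x :=
  xi_convexOn_general μ0 α0 D X0in hα0 hD hC2 hμ00 hμ0' hμ0''
end

section
/- Let μ0 be C² with μ0(0)=0, μ0' > 0, μ0'' ≤ 0, and let ξ(X0) = D(X0in − α0 X0)/μ0(X0) on (0, X0in/α0), with α0, D, X0in, k0, k1, D1 > 0. The equation ξ'(X0) = −α0·D·k0/(k1·D1) admits a solution in (0, X0in/α0) if and only if k0·μ0(X0in/α0) > k1·D1; moreover, when ξ' is strictly increasing on this interval, the solution is unique. -/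
/-!
With `X = X0in / α0`, the quotient rule gives
`ξ' = (-α0 D μ0 - D (X0in - α0 x) μ0') / μ0²`, so `ξ'(X) = -α0 D / μ0(X)`. On `(0, X)` the second
term of the numerator is negative and `μ0` is increasing, whence `ξ' < -α0 D / μ0 < ξ'(X)`; as
`x → 0⁺` the numerator tends to `-D X0in μ0'(0) < 0` and `μ0² → 0⁺`, so `ξ' → -∞`. By the
intermediate value theorem `ξ'` takes on `(0, X)` exactly the values below `ξ'(X)`, and
`-α0 D k0 / (k1 D1) < -α0 D / μ0(X)` is the condition `k1 D1 < k0 μ0(X)`.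
-/

open Set Filter Topology

theorem Filter.Tendsto.div_atBot_of_neg {𝕜 α : Type*} [Field 𝕜] [LinearOrder 𝕜]
    [IsStrictOrderedRing 𝕜] [TopologicalSpace 𝕜] [OrderTopology 𝕜] {l : Filter α}
    {f g : α → 𝕜} {C : 𝕜} (hC : C < 0) (hf : Tendsto f l (𝓝 C)) (hg : Tendsto g l (𝓝[>] 0)) :
    Tendsto (fun x => f x / g x) l atBot := by
  simpa only [div_eq_mul_inv, Pi.inv_apply] using hf.neg_mul_atTop hC hg.inv_tendsto_nhdsGT_zero

theorem exists_mem_Ioo_eq_iff_lt {α δ : Type*} [ConditionallyCompleteLinearOrder α]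
    [TopologicalSpace α] [OrderTopology α] [DenselyOrdered α] [LinearOrder δ]
    [TopologicalSpace δ] [OrderClosedTopology δ] {f : α → δ} {a b : α} {y : δ} (hab : a < b)
    (hf : ContinuousOn f (Ioc a b)) (hbot : Tendsto f (𝓝[>] a) atBot)
    (hlt : ∀ x ∈ Ioo a b, f x < f b) :
    (∃ x ∈ Ioo a b, f x = y) ↔ y < f b := by
  refine ⟨fun ⟨x, hx, hxy⟩ => hxy ▸ hlt x hx, fun hy => ?_⟩
  have := nhdsGT_neBot_of_exists_gt ⟨b, hab⟩
  have := nhdsLT_neBot_of_exists_lt ⟨a, hab⟩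
  have hleft : 𝓝[>] a ≤ 𝓟 (Ioo a b) := le_principal_iff.2 (Ioo_mem_nhdsGT hab)
  have hright : 𝓝[<] b ≤ 𝓟 (Ioo a b) := le_principal_iff.2 (Ioo_mem_nhdsLT hab)
  have hfb : Tendsto f (𝓝[<] b) (𝓝 (f b)) :=
    ((hf b (right_mem_Ioc.2 hab)).mono_of_mem_nhdsWithin
      (Ioc_mem_nhdsLE hab)).tendsto.mono_left (nhdsWithin_mono b Iio_subset_Iic_self)
  exact isPreconnected_Ioo.intermediate_value_Iio hleft hright (hf.mono Ioo_subset_Ioc_self)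
    hbot hfb hy

section Xi

variable {g : ℝ → ℝ} {α D X₀ : ℝ}

/-- `ξ'` for `ξ x = D (X₀ - α x) / g x`, see `hasDerivAt_xi`. -/
noncomputable def xiDeriv (g : ℝ → ℝ) (α D X₀ x : ℝ) : ℝ :=
  (-(α * D) * g x - D * (X₀ - α * x) * deriv g x) / g x ^ 2

theorem hasDerivAt_xi {x : ℝ} (hg : DifferentiableAt ℝ g x) (hgx : g x ≠ 0) :
    HasDerivAt (fun x => D * (X₀ - α * x) / g x) (xiDeriv g α D X₀ x) x := by
  have hnum : HasDerivAt (fun x => D * (X₀ - α * x)) (-(α * D)) x := by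
    simpa [mul_comm] using (((hasDerivAt_id x).const_mul α).const_sub X₀).const_mul D
  exact hnum.div hg.hasDerivAt hgx

theorem xiDeriv_div (hα : α ≠ 0) (hg : g (X₀ / α) ≠ 0) :
    xiDeriv g α D X₀ (X₀ / α) = -(α * D) / g (X₀ / α) := by
  rw [xiDeriv, mul_div_cancel₀ X₀ hα, sub_self]
  field_simp
  ring

theorem xiDeriv_lt_xiDeriv_div {x : ℝ} (hα : 0 < α) (hD : 0 < D) (hx : x < X₀ / α)
    (hgx : 0 < g x) (hg'x : 0 < deriv g x) (hgX : g x < g (X₀ / α)) :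
    xiDeriv g α D X₀ x < xiDeriv g α D X₀ (X₀ / α) := by
  have hnum : 0 < D * (X₀ - α * x) := mul_pos hD (by rw [lt_div_iff₀ hα] at hx; linarith)
  rw [xiDeriv_div hα.ne' (hgx.trans hgX).ne']
  calc xiDeriv g α D X₀ x < -(α * D) * g x / g x ^ 2 := by
        unfold xiDeriv
        gcongr
        nlinarith [mul_pos hnum hg'x]
    _ = -(α * D) / g x := by field_simp
    _ < -(α * D) / g (X₀ / α) := by
        rw [neg_div, neg_div, neg_lt_neg_iff]
        exact div_lt_div_of_pos_left (mul_pos hα hD) hgx hgX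

theorem continuousOn_xiDeriv {s : Set ℝ} (hg : ContDiff ℝ 1 g) (hs : ∀ x ∈ s, g x ≠ 0) :
    ContinuousOn (xiDeriv g α D X₀) s := by
  have := hg.continuous_deriv le_rfl
  have := hg.continuous
  exact ContinuousOn.div (by fun_prop) (by fun_prop) fun x hx => pow_ne_zero 2 (hs x hx)

theorem tendsto_xiDeriv_atBot (hg : ContDiff ℝ 1 g) (hg0 : g 0 = 0) (hpos : ∀ x > 0, 0 < g x)
    (hg'0 : 0 < deriv g 0) (hD : 0 < D) (hX₀ : 0 < X₀) :
    Tendsto (xiDeriv g α D X₀) (𝓝[>] 0) atBot := by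
  have := hg.continuous_deriv le_rfl
  have := hg.continuous
  have hnum : Tendsto (fun x => -(α * D) * g x - D * (X₀ - α * x) * deriv g x) (𝓝[>] 0)
      (𝓝 (-(D * X₀ * deriv g 0))) := by
    have : Continuous fun x => -(α * D) * g x - D * (X₀ - α * x) * deriv g x := by fun_prop
    convert (this.tendsto 0).mono_left nhdsWithin_le_nhds using 2
    simp [hg0]
  have hden : Tendsto (fun x => g x ^ 2) (𝓝[>] 0) (𝓝[>] 0) := by
    refine tendsto_nhdsWithin_iff.2 ⟨?_, eventually_nhdsWithin_of_forall fun x hx => ?_⟩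
    · simpa [hg0] using ((hg.continuous.tendsto 0).pow 2).mono_left nhdsWithin_le_nhds
    · exact pow_pos (hpos x hx) 2
  exact hnum.div_atBot_of_neg (by have := mul_pos (mul_pos hD hX₀) hg'0; linarith) hden

end Xi

theorem xi_deriv_equation_solvability_general
    (μ0 : ℝ → ℝ) (α0 D X0in k0 k1 D1 : ℝ)
    (hα0 : 0 < α0) (hD : 0 < D) (hX0in : 0 < X0in)
    (hk1 : 0 < k1) (hD1 : 0 < D1)
    (hC2 : ContDiff ℝ 2 μ0) (hμ00 : μ0 0 = 0)
    (hμ0' : ∀ x ∈ Ici (0:ℝ), 0 < deriv μ0 x)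
    (ξ : ℝ → ℝ) (hξ : ∀ x, ξ x = D * (X0in - α0 * x) / μ0 x) :
    ((∃ x ∈ Ioo (0:ℝ) (X0in / α0),
        deriv ξ x = -(α0 * D * k0) / (k1 * D1)) ↔
      k1 * D1 < k0 * μ0 (X0in / α0)) ∧
    (StrictMonoOn (deriv ξ) (Ioo (0:ℝ) (X0in / α0)) →
      ∀ x ∈ Ioo (0:ℝ) (X0in / α0), ∀ y ∈ Ioo (0:ℝ) (X0in / α0),
        deriv ξ x = -(α0 * D * k0) / (k1 * D1) →
        deriv ξ y = -(α0 * D * k0) / (k1 * D1) → x = y) := by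
  refine ⟨?_, fun hξ' x hx y hy hxc hyc => hξ'.injOn hx hy (hxc.trans hyc.symm)⟩
  set X := X0in / α0
  have hX : 0 < X := div_pos hX0in hα0
  have hC1 : ContDiff ℝ 1 μ0 := hC2.of_le (by norm_num)
  have hmono : StrictMonoOn μ0 (Ici 0) :=
    strictMonoOn_of_deriv_pos (convex_Ici 0) hC1.continuous.continuousOn
      fun x hx => hμ0' x (interior_subset hx)
  have hpos : ∀ x > 0, 0 < μ0 x := fun x hx => hμ00 ▸ hmono self_mem_Ici hx.le hx
  have hderiv : EqOn (deriv ξ) (xiDeriv μ0 α0 D X0in) (Ioo 0 X) := fun x hx => by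
    rw [funext hξ]
    exact (hasDerivAt_xi (hC1.differentiable one_ne_zero x) (hpos x hx.1).ne').deriv
  have hsolvable := exists_mem_Ioo_eq_iff_lt (y := -(α0 * D * k0) / (k1 * D1)) hX
    (continuousOn_xiDeriv hC1 fun x hx => (hpos x hx.1).ne')
    (tendsto_xiDeriv_atBot hC1 hμ00 hpos (hμ0' 0 self_mem_Ici) hD hX0in)
    fun x hx => xiDeriv_lt_xiDeriv_div hα0 hD hx.2 (hpos x hx.1) (hμ0' x hx.1.le)
      (hmono hx.1.le hX.le hx.2)
  refine (exists_congr fun x => and_congr_right fun hx => by rw [hderiv hx]).trans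
    (hsolvable.trans ?_)
  rw [xiDeriv_div hα0.ne' (hpos X hX).ne', neg_div, neg_div, neg_lt_neg_iff,
    div_lt_div_iff₀ (hpos X hX) (mul_pos hk1 hD1), mul_assoc (α0 * D) k0,
    mul_lt_mul_iff_right₀ (mul_pos hα0 hD)]

theorem xi_deriv_equation_solvability
    (μ0 : ℝ → ℝ) (α0 D X0in k0 k1 D1 : ℝ)
    (hα0 : 0 < α0) (hD : 0 < D) (hX0in : 0 < X0in)
    (hk0 : 0 < k0) (hk1 : 0 < k1) (hD1 : 0 < D1)
    (hC2 : ContDiff ℝ 2 μ0) (hμ00 : μ0 0 = 0)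
    (hμ0' : ∀ x ∈ Ici (0:ℝ), 0 < deriv μ0 x)
    (hμ0'' : ∀ x ∈ Ici (0:ℝ), deriv (deriv μ0) x ≤ 0)
    (ξ : ℝ → ℝ) (hξ : ∀ x, ξ x = D * (X0in - α0 * x) / μ0 x) :
    ((∃ x ∈ Ioo (0:ℝ) (X0in / α0),
        deriv ξ x = -(α0 * D * k0) / (k1 * D1)) ↔
      k1 * D1 < k0 * μ0 (X0in / α0)) ∧
    (StrictMonoOn (deriv ξ) (Ioo (0:ℝ) (X0in / α0)) →
      ∀ x ∈ Ioo (0:ℝ) (X0in / α0), ∀ y ∈ Ioo (0:ℝ) (X0in / α0),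
        deriv ξ x = -(α0 * D * k0) / (k1 * D1) →
        deriv ξ y = -(α0 * D * k0) / (k1 * D1) → x = y) :=
  xi_deriv_equation_solvability_general μ0 α0 D X0in k0 k1 D1 hα0 hD hX0in hk1 hD1 hC2 hμ00 hμ0' ξ
    hξ
end

section
/- Let φ(X0) = ξ(X0) − δ(X0) on (0, X0in/α0), where ξ(X0) = D(X0in − α0 X0)/μ0(X0) and δ(X0) = (D/(k1·D1))·[(S1in − λ1) + k0·(X0in − α0·X0)], with all parameters positive and μ0 C¹, μ0(0)=0, increasing, concave. If k0·μ0(X0in/α0) ≤ k1·D1, then ξ'(X0) ≤ δ'(X0) = −α0·D·k0/(k1·D1) for all X0 in the interval, so φ is non-increasing. -/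
/-!
Writing `ξ = D (X0in - α0 x) / μ0` and using `μ0 > 0`, `μ0' ≥ 0` on `(0, ∞)` and `X0in - α0 x > 0`
on the interval, the quotient rule gives `ξ'(x) ≤ -α0 D / μ0 x`. Monotonicity of `μ0` bounds this
by `-α0 D / μ0 (X0in / α0)`, which the slope condition bounds by `-α0 D k0 / (k1 D1) = δ'`.
Hence `(ξ - δ)' ≤ 0` on the interval.
-/

open Set

lemma StrictMonoOn.pos_of_map_zero {f : ℝ → ℝ} (hf : StrictMonoOn f (Ici 0)) (h0 : f 0 = 0)
    {x : ℝ} (hx : 0 < x) : 0 < f x :=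
  h0 ▸ hf self_mem_Ici hx.le hx

lemma MonotoneOn.deriv_nonneg_of_mem_nhds {f : ℝ → ℝ} {s : Set ℝ} {x : ℝ} (hf : MonotoneOn f s)
    (hs : s ∈ nhds x) : 0 ≤ deriv f x := by
  rw [← derivWithin_of_mem_nhds hs]
  exact hf.derivWithin_nonneg

lemma hasDerivAt_affine_div {μ : ℝ → ℝ} {μ' D X α x : ℝ} (hμ : HasDerivAt μ μ' x)
    (hμx : μ x ≠ 0) :
    HasDerivAt (fun y => D * (X - α * y) / μ y)
      ((-(D * α) * μ x - D * (X - α * x) * μ') / μ x ^ 2) x := by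
  have hnum : HasDerivAt (fun y => D * (X - α * y)) (-(D * α)) x := by
    simpa using ((hasDerivAt_id x).const_mul α).const_sub X |>.const_mul D
  exact hnum.div hμ hμx

lemma hasDerivAt_const_mul_affine (c a k X α x : ℝ) :
    HasDerivAt (fun y => c * (a + k * (X - α * y))) (-(c * k * α)) x := by
  simpa [mul_assoc] using
    ((((hasDerivAt_id x).const_mul α).const_sub X).const_mul k).const_add a |>.const_mul c

lemma affine_div_deriv_le {μ μ' D X α x : ℝ} (hμ : 0 < μ) (hμ' : 0 ≤ μ') (hD : 0 ≤ D)
    (hx : α * x ≤ X) :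
    (-(D * α) * μ - D * (X - α * x) * μ') / μ ^ 2 ≤ -(D * α) / μ := by
  rw [div_le_div_iff₀ (by positivity) hμ]
  have : 0 ≤ D * (X - α * x) * μ' * μ := by
    have := sub_nonneg.2 hx
    positivity
  nlinarith

lemma neg_div_le_neg_mul_div_of_mul_le {c m k K : ℝ} (hc : 0 ≤ c) (hm : 0 < m) (hk : 0 < k)
    (h : k * m ≤ K) :
    -c / m ≤ -(c * k) / K := by
  have hK : 0 < K := (mul_pos hk hm).trans_le h
  rw [neg_div, neg_div, neg_le_neg_iff, div_le_div_iff₀ hK hm]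
  nlinarith

lemma antitoneOn_sub_of_deriv_le {f g : ℝ → ℝ} {s : Set ℝ} {g' : ℝ} (hs : Convex ℝ s)
    (hs' : IsOpen s) (hf : ∀ x ∈ s, DifferentiableAt ℝ f x) (hg : ∀ x, HasDerivAt g g' x)
    (hle : ∀ x ∈ s, deriv f x ≤ g') :
    AntitoneOn (fun x => f x - g x) s := by
  have hdiff : ∀ x ∈ s, DifferentiableAt ℝ (fun x => f x - g x) x :=
    fun x hx => (hf x hx).sub (hg x).differentiableAt
  refine antitoneOn_of_deriv_nonpos hs (fun x hx => (hdiff x hx).continuousAt.continuousWithinAt)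
    ?_ ?_ <;> rw [hs'.interior_eq]
  · exact fun x hx => (hdiff x hx).differentiableWithinAt
  · intro x hx
    rw [deriv_fun_sub (hf x hx) (hg x).differentiableAt, (hg x).deriv]
    linarith [hle x hx]

theorem phi_antitone_of_slope_condition_general
    (μ0 : ℝ → ℝ) (α0 D X0in k0 k1 D1 S1in lam1 : ℝ)
    (hα0 : 0 < α0) (hD : 0 < D)
    (hk0 : 0 < k0)
    (hC1 : ContDiff ℝ 1 μ0) (hμ00 : μ0 0 = 0)
    (hmono : StrictMonoOn μ0 (Ici 0))
    (ξ δ : ℝ → ℝ)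
    (hξ : ∀ x, ξ x = D * (X0in - α0 * x) / μ0 x)
    (hδ : ∀ x, δ x = D / (k1 * D1) * ((S1in - lam1) + k0 * (X0in - α0 * x)))
    (hcond : k0 * μ0 (X0in / α0) ≤ k1 * D1) :
    (∀ x ∈ Ioo (0:ℝ) (X0in / α0),
      deriv ξ x ≤ -(α0 * D * k0) / (k1 * D1)) ∧
    AntitoneOn (fun x => ξ x - δ x) (Ioo (0:ℝ) (X0in / α0)) := by
  rw [show ξ = _ from funext hξ]
  have hμpos : ∀ x, 0 < x → 0 < μ0 x := fun x => hmono.pos_of_map_zero hμ00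
  have hμ'nonneg : ∀ x, 0 < x → 0 ≤ deriv μ0 x := fun x hx =>
    hmono.monotoneOn.deriv_nonneg_of_mem_nhds (Ici_mem_nhds hx)
  have hξ' : ∀ x ∈ Ioo 0 (X0in / α0), HasDerivAt (fun y => D * (X0in - α0 * y) / μ0 y)
      ((-(D * α0) * μ0 x - D * (X0in - α0 * x) * deriv μ0 x) / μ0 x ^ 2) x := fun x hx =>
    hasDerivAt_affine_div (hC1.differentiable one_ne_zero x).hasDerivAt (hμpos x hx.1).ne'
  have hbound : ∀ x ∈ Ioo 0 (X0in / α0),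
      deriv (fun y => D * (X0in - α0 * y) / μ0 y) x ≤ -(α0 * D * k0) / (k1 * D1) := by
    rintro x ⟨hx0, hxX⟩
    have hend : 0 < X0in / α0 := hx0.trans hxX
    rw [(hξ' x ⟨hx0, hxX⟩).deriv, mul_comm α0 D]
    calc _ ≤ -(D * α0) / μ0 x := affine_div_deriv_le (hμpos x hx0) (hμ'nonneg x hx0) hD.le
            (by linarith [(lt_div_iff₀' hα0).1 hxX])
      _ ≤ -(D * α0) / μ0 (X0in / α0) := by
        rw [neg_div, neg_div, neg_le_neg_iff]
        exact div_le_div_of_nonneg_left (by positivity) (hμpos x hx0)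
          (hmono.monotoneOn hx0.le hend.le hxX.le)
      _ ≤ _ := neg_div_le_neg_mul_div_of_mul_le (by positivity) (hμpos _ hend) hk0 hcond
  have hδ' : ∀ x, HasDerivAt δ (-(α0 * D * k0) / (k1 * D1)) x := fun x => by
    rw [show δ = _ from funext hδ]
    convert hasDerivAt_const_mul_affine (D / (k1 * D1)) (S1in - lam1) k0 X0in α0 x using 1
    ring
  exact ⟨hbound, antitoneOn_sub_of_deriv_le (convex_Ioo _ _) isOpen_Ioo
    (fun x hx => (hξ' x hx).differentiableAt) hδ' hbound⟩

theorem phi_antitone_of_slope_condition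
    (μ0 : ℝ → ℝ) (α0 D X0in k0 k1 D1 S1in lam1 : ℝ)
    (hα0 : 0 < α0) (hD : 0 < D) (hX0in : 0 < X0in)
    (hk0 : 0 < k0) (hk1 : 0 < k1) (hD1 : 0 < D1) (hlam1 : 0 < lam1)
    (hS1in : 0 ≤ S1in)
    (hC1 : ContDiff ℝ 1 μ0) (hμ00 : μ0 0 = 0)
    (hmono : StrictMonoOn μ0 (Ici 0))
    (hconc : ConcaveOn ℝ (Ici 0) μ0)
    (ξ δ : ℝ → ℝ)
    (hξ : ∀ x, ξ x = D * (X0in - α0 * x) / μ0 x)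
    (hδ : ∀ x, δ x = D / (k1 * D1) * ((S1in - lam1) + k0 * (X0in - α0 * x)))
    (hcond : k0 * μ0 (X0in / α0) ≤ k1 * D1) :
    (∀ x ∈ Ioo (0:ℝ) (X0in / α0),
      deriv ξ x ≤ -(α0 * D * k0) / (k1 * D1)) ∧
    AntitoneOn (fun x => ξ x - δ x) (Ioo (0:ℝ) (X0in / α0)) :=
  phi_antitone_of_slope_condition_general μ0 α0 D X0in k0 k1 D1 S1in lam1 hα0 hD hk0 hC1 hμ00 hmono
    ξ δ hξ hδ hcond
end

section
/- Under the hypotheses of the previous statement (case k0·μ0(X0in/α0) ≤ k1·D1), the equation ξ(X0) = δ(X0) has a solution in (0, X0in/α0) if and only if S1in > λ1, and in that case the solution is unique. -/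
/-!
With `u X0 = X0in - α0 X0` and `s = S1in - λ1`, we have
`ξ - δ = D / (k1 D1 μ0) * balance`, where `balance = u (k1 D1 - k0 μ0) - s μ0` is continuous.
On `(0, X0in/α0)` both `u` and `k1 D1 - k0 μ0` are positive, the latter by the case hypothesis.
If `s ≤ 0` this makes `balance` positive, so there is no equilibrium. If `s > 0`, then
`balance 0 = k1 D1 X0in > 0 > -s μ0(X0in/α0) = balance (X0in/α0)` gives a root by the
intermediate value theorem, and `balance` is strictly decreasing (a product of nonnegative
decreasing factors minus a strictly increasing term), so the root is unique.
-/

open Set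

section

def balance (μ u : ℝ → ℝ) (c k s x : ℝ) : ℝ := u x * (c - k * μ x) - s * μ x

variable {μ u : ℝ → ℝ} {c k s x : ℝ}

lemma mul_div_sub_div_mul_eq {D : ℝ} (hc : c ≠ 0) (hμ : μ x ≠ 0) :
    D * u x / μ x - D / c * (s + k * u x) = D / (c * μ x) * balance μ u c k s x := by
  unfold balance
  field_simp
  ring

lemma mul_div_eq_div_mul_iff_balance_eq_zero {D : ℝ} (hD : D ≠ 0) (hc : c ≠ 0)
    (hμ : μ x ≠ 0) :
    D * u x / μ x = D / c * (s + k * u x) ↔ balance μ u c k s x = 0 := by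
  rw [← sub_eq_zero, mul_div_sub_div_mul_eq hc hμ, mul_eq_zero,
    or_iff_right (div_ne_zero hD (mul_ne_zero hc hμ))]

lemma balance_pos_of_nonpos (hu : 0 < u x) (hμ : 0 < μ x) (hkμ : k * μ x < c)
    (hs : s ≤ 0) : 0 < balance μ u c k s x := by
  unfold balance
  nlinarith [mul_pos hu (sub_pos.mpr hkμ)]

lemma strictAntiOn_balance {I : Set ℝ} (hu : AntitoneOn u I) (hu0 : ∀ x ∈ I, 0 ≤ u x)
    (hμ : StrictMonoOn μ I) (hk : 0 ≤ k) (hc : ∀ x ∈ I, k * μ x ≤ c) (hs : 0 < s) :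
    StrictAntiOn (balance μ u c k s) I := by
  intro a ha b hb hab
  have hμab : μ a < μ b := hμ ha hb hab
  have hub : u b ≤ u a := hu ha hb hab.le
  have hcb : 0 ≤ c - k * μ b := sub_nonneg.mpr (hc b hb)
  have hcab : c - k * μ b ≤ c - k * μ a := by nlinarith
  unfold balance
  nlinarith [mul_le_mul hub hcab hcb (hu0 a ha)]

lemma continuous_balance (hu : Continuous u) (hμ : Continuous μ) :
    Continuous (balance μ u c k s) := by
  unfold balance
  fun_prop

lemma exists_mem_Ioo_balance_eq_zero {a b : ℝ} (hab : a ≤ b) (hu : Continuous u)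
    (hμ : Continuous μ) (hμa : μ a = 0) (hub : u b = 0) (hc : 0 < u a * c) (hs : 0 < s * μ b) :
    ∃ x ∈ Ioo a b, balance μ u c k s x = 0 :=
  intermediate_value_Ioo' hab (continuous_balance hu hμ).continuousOn
    ⟨by simpa [balance, hub] using hs, by simpa [balance, hμa] using hc⟩

end

theorem equilibrium_existence_uniqueness_case1_general
    (μ0 : ℝ → ℝ) (α0 D X0in k0 k1 D1 S1in lam1 : ℝ)
    (hα0 : 0 < α0) (hD : 0 < D) (hX0in : 0 < X0in)
    (hk0 : 0 < k0) (hk1 : 0 < k1) (hD1 : 0 < D1)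
    (hC1 : ContDiff ℝ 1 μ0) (hμ00 : μ0 0 = 0)
    (hmono : StrictMonoOn μ0 (Ici 0))
    (ξ δ : ℝ → ℝ)
    (hξ : ∀ x, ξ x = D * (X0in - α0 * x) / μ0 x)
    (hδ : ∀ x, δ x = D / (k1 * D1) * ((S1in - lam1) + k0 * (X0in - α0 * x)))
    (hcond : k0 * μ0 (X0in / α0) ≤ k1 * D1) :
    ((∃ x ∈ Ioo (0:ℝ) (X0in / α0), ξ x = δ x) ↔ lam1 < S1in) ∧
    (lam1 < S1in →
      ∃! x, x ∈ Ioo (0:ℝ) (X0in / α0) ∧ ξ x = δ x) := by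
  set E := X0in / α0
  set u : ℝ → ℝ := fun x => X0in - α0 * x
  set g := balance μ0 u (k1 * D1) k0 (S1in - lam1)
  have hE : 0 < E := div_pos hX0in hα0
  have hu : ∀ x, x < E → 0 < u x := fun x hx => by
    have := (lt_div_iff₀' hα0).mp hx
    simp only [u]; linarith
  have huE : u E = 0 := by simp only [u, E]; field_simp; ring
  have hμpos : ∀ x, 0 < x → 0 < μ0 x := fun x hx => hμ00 ▸ hmono self_mem_Ici hx.le hx
  have hkμ : ∀ x ∈ Ioo 0 E, k0 * μ0 x < k1 * D1 := fun x hx =>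
    (mul_lt_mul_of_pos_left (hmono hx.1.le hE.le hx.2) hk0).trans_le hcond
  have hequiv : ∀ x ∈ Ioo 0 E, ξ x = δ x ↔ g x = 0 := fun x hx => by
    rw [hξ, hδ]
    exact mul_div_eq_div_mul_iff_balance_eq_zero (u := u) hD.ne' (mul_pos hk1 hD1).ne'
      (hμpos x hx.1).ne'
  have hunique : lam1 < S1in → ∃! x, x ∈ Ioo 0 E ∧ ξ x = δ x := fun hs => by
    obtain ⟨x, hx, hgx⟩ : ∃ x ∈ Ioo 0 E, g x = 0 :=
      exists_mem_Ioo_balance_eq_zero hE.le (by fun_prop) hC1.continuous hμ00 huE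
        (by simp only [u, mul_zero, sub_zero]; positivity) (mul_pos (sub_pos.mpr hs) (hμpos E hE))
    have hanti : StrictAntiOn g (Ioo 0 E) :=
      strictAntiOn_balance (fun a _ b _ hab => by simp only [u]; nlinarith)
        (fun x hx => (hu x hx.2).le) (hmono.mono (Ioo_subset_Ioi_self.trans Ioi_subset_Ici_self))
        hk0.le (fun x hx => (hkμ x hx).le) (sub_pos.mpr hs)
    exact ⟨x, ⟨hx, (hequiv x hx).mpr hgx⟩, fun y ⟨hy, hξδ⟩ =>
      hanti.injOn hy hx (((hequiv y hy).mp hξδ).trans hgx.symm)⟩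
  refine ⟨⟨fun ⟨x, hx, hξδ⟩ => ?_, fun hs => (hunique hs).exists⟩, hunique⟩
  by_contra! hs
  exact (balance_pos_of_nonpos (hu x hx.2) (hμpos x hx.1) (hkμ x hx)
    (sub_nonpos.mpr hs)).ne' ((hequiv x hx).mp hξδ)

theorem equilibrium_existence_uniqueness_case1
    (μ0 : ℝ → ℝ) (α0 D X0in k0 k1 D1 S1in lam1 : ℝ)
    (hα0 : 0 < α0) (hD : 0 < D) (hX0in : 0 < X0in)
    (hk0 : 0 < k0) (hk1 : 0 < k1) (hD1 : 0 < D1) (hlam1 : 0 < lam1)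
    (hC1 : ContDiff ℝ 1 μ0) (hμ00 : μ0 0 = 0)
    (hmono : StrictMonoOn μ0 (Ici 0))
    (hconc : ConcaveOn ℝ (Ici 0) μ0)
    (ξ δ : ℝ → ℝ)
    (hξ : ∀ x, ξ x = D * (X0in - α0 * x) / μ0 x)
    (hδ : ∀ x, δ x = D / (k1 * D1) * ((S1in - lam1) + k0 * (X0in - α0 * x)))
    (hcond : k0 * μ0 (X0in / α0) ≤ k1 * D1) :
    ((∃ x ∈ Ioo (0:ℝ) (X0in / α0), ξ x = δ x) ↔ lam1 < S1in) ∧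
    (lam1 < S1in →
      ∃! x, x ∈ Ioo (0:ℝ) (X0in / α0) ∧ ξ x = δ x) :=
  equilibrium_existence_uniqueness_case1_general μ0 α0 D X0in k0 k1 D1 S1in lam1 hα0 hD hX0in hk0
    hk1 hD1 hC1 hμ00 hmono ξ δ hξ hδ hcond
end

section
/- With m11 = α0·D + μ0'(X0ᵏ)·X1ᵏ, m13 = μ0(X0ᵏ), m21 = k0·μ0'(X0ᵏ)·X1ᵏ, m32 = μ1'(λ1)·X1ᵏ, θ = k0·μ0(X0ᵏ) − k1·D1, and c3 = m32·(m21·m13 − θ·m11), if we set ξ'(X0ᵏ) := −m11/μ0(X0ᵏ), then c3 = −k1·D1·μ0(X0ᵏ)·m32·(ξ'(X0ᵏ) + α0·D·k0/(k1·D1)). In particular, c3 > 0 if and only if ξ'(X0ᵏ) < −α0·D·k0/(k1·D1). -/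
/-! In `m21 * m13 - θ * m11` the terms carrying `μ0'(X0ᵏ) X1ᵏ` cancel, leaving
`k1 D1 m11 - α0 D k0 μ0(X0ᵏ)`; substituting `m11 = -μ0(X0ᵏ) ξ'` factors out `-k1 D1 μ0(X0ᵏ)`.
Since `k1 D1 μ0(X0ᵏ) m32 > 0`, the sign of `c3` is the opposite of that of `ξ' + α0 D k0 / (k1 D1)`. -/

theorem routh_minor_eq {R : Type*} [CommRing R] (α0 D k0 k1 D1 μ0k μ0'k X1k : R) :
    k0 * μ0'k * X1k * μ0k - (k0 * μ0k - k1 * D1) * (α0 * D + μ0'k * X1k) =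
      k1 * D1 * (α0 * D + μ0'k * X1k) - α0 * D * k0 * μ0k := by
  ring

theorem mul_sub_mul_eq_neg_mul_mul_neg_div_add_div {K : Type*} [Field K] {k μ : K}
    (hk : k ≠ 0) (hμ : μ ≠ 0) (m c : K) :
    k * m - c * μ = -(k * μ) * (-m / μ + c / k) := by
  field_simp
  ring

theorem pos_neg_mul_iff_lt_neg_div {K : Type*} [Field K] [LinearOrder K] [IsStrictOrderedRing K]
    {p k : K} (hp : 0 < p) (x c : K) :
    0 < -p * (x + c / k) ↔ x < -c / k := by
  rw [neg_mul, neg_pos, neg_div, lt_neg_iff_add_neg]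
  exact smul_neg_iff_of_pos_left hp

theorem c3_slope_identity_general
    (α0 D k0 k1 D1 μ0k μ0'k X1k μ1'lam : ℝ)
    (hk1 : 0 < k1) (hD1 : 0 < D1)
    (hμ0k : 0 < μ0k) (hX1k : 0 < X1k) (hμ1' : 0 < μ1'lam)
    (m11 m13 m21 m32 θ ξ' c3 : ℝ)
    (hm11 : m11 = α0 * D + μ0'k * X1k)
    (hm13 : m13 = μ0k)
    (hm21 : m21 = k0 * μ0'k * X1k)
    (hm32 : m32 = μ1'lam * X1k)
    (hθ : θ = k0 * μ0k - k1 * D1)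
    (hc3 : c3 = m32 * (m21 * m13 - θ * m11))
    (hξ' : ξ' = -m11 / μ0k) :
    c3 = -(k1 * D1 * μ0k * m32) * (ξ' + α0 * D * k0 / (k1 * D1)) ∧
    (0 < c3 ↔ ξ' < -(α0 * D * k0) / (k1 * D1)) := by
  have hk1D1 : 0 < k1 * D1 := mul_pos hk1 hD1
  have hid : c3 = -(k1 * D1 * μ0k * m32) * (ξ' + α0 * D * k0 / (k1 * D1)) := by
    rw [hc3, hm21, hm13, hθ, hm11, routh_minor_eq, ← hm11,
      mul_sub_mul_eq_neg_mul_mul_neg_div_add_div hk1D1.ne' hμ0k.ne', ← hξ']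
    ring
  have hcoef : 0 < k1 * D1 * μ0k * m32 := by
    rw [hm32]
    positivity
  exact ⟨hid, hid ▸ pos_neg_mul_iff_lt_neg_div hcoef ξ' _⟩

theorem c3_slope_identity
    (α0 D k0 k1 D1 μ0k μ0'k X1k μ1'lam : ℝ)
    (hα0 : 0 < α0) (hD : 0 < D) (hk0 : 0 < k0) (hk1 : 0 < k1) (hD1 : 0 < D1)
    (hμ0k : 0 < μ0k) (hμ0'k : 0 ≤ μ0'k) (hX1k : 0 < X1k) (hμ1' : 0 < μ1'lam)
    (m11 m13 m21 m32 θ ξ' c3 : ℝ)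
    (hm11 : m11 = α0 * D + μ0'k * X1k)
    (hm13 : m13 = μ0k)
    (hm21 : m21 = k0 * μ0'k * X1k)
    (hm32 : m32 = μ1'lam * X1k)
    (hθ : θ = k0 * μ0k - k1 * D1)
    (hc3 : c3 = m32 * (m21 * m13 - θ * m11))
    (hξ' : ξ' = -m11 / μ0k) :
    c3 = -(k1 * D1 * μ0k * m32) * (ξ' + α0 * D * k0 / (k1 * D1)) ∧
    (0 < c3 ↔ ξ' < -(α0 * D * k0) / (k1 * D1)) :=
  c3_slope_identity_general α0 D k0 k1 D1 μ0k μ0'k X1k μ1'lam hk1 hD1 hμ0k hX1k hμ1' m11 m13 m21 m32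
    θ ξ' c3 hm11 hm13 hm21 hm32 hθ hc3 hξ'
end

section
/- Suppose S1in ≥ λ1(D1) and k0·μ0(X0in/α0) > k1·D1 (equivalently ξ'(X0in/α0) > −α0·D·k0/(k1·D1)). Then the equation ξ(X0) = δ(X0), with ξ(X0) = D(X0in − α0·X0)/μ0(X0) and δ(X0) = (D/(k1·D1))[(S1in − λ1(D1)) + k0·(X0in − α0·X0)], has exactly one solution in (0, X0in/α0). -/
/-!
Multiplying by the positive factor `k1 D1 μ0(x) / D`, the equation `ξ = δ` on `(0, X0in/α0)`
becomes `g = 0` with `g x = k1 D1 (X0in - α0 x) - μ0(x) ((S1in - λ1) + k0 (X0in - α0 x))`.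
As `μ0` is increasing and concave and the second factor is affine, decreasing and nonnegative,
`g` is strictly convex on `[0, X0in/α0]`; moreover `g 0 > 0` and
`g (X0in/α0) = -μ0(X0in/α0) (S1in - λ1) ≤ 0`. Strict convexity allows at most one zero of `g`
to the left of a point where `g ≤ 0`. For existence, `g` is negative just left of `X0in/α0`:
by continuity if `S1in > λ1`, and since `g'(X0in/α0) > 0` if `S1in = λ1`.
-/

open Set Filter Topology

theorem pos_of_deriv_pos_of_map_zero {μ : ℝ → ℝ} (hμ : Differentiable ℝ μ) (h0 : μ 0 = 0)
    (h' : ∀ x ∈ Ici (0:ℝ), 0 < deriv μ x) {x : ℝ} (hx : 0 < x) : 0 < μ x := by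
  have hmono : StrictMonoOn μ (Ici 0) :=
    strictMonoOn_of_deriv_pos (convex_Ici 0) hμ.continuous.continuousOn
      fun y hy => h' y (interior_subset hy)
  simpa [h0] using hmono self_mem_Ici hx.le hx

theorem convexOn_const_add_mul {s : Set ℝ} (hs : Convex ℝ s) (u v : ℝ) :
    ConvexOn ℝ s fun x => u + v * x :=
  ⟨hs, fun x _ y _ a b _ _ hab => le_of_eq <| by
    simp only [smul_eq_mul]
    linear_combination (-u) * hab⟩

theorem strictConcaveOn_mul_of_hasDerivAt {μ h : ℝ → ℝ} {s : Set ℝ} {m : ℝ} (hs : Convex ℝ s)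
    (hμ : Differentiable ℝ μ) (hμ₁ : Differentiable ℝ (deriv μ))
    (hμ' : ∀ x ∈ s, 0 < deriv μ x) (hμ'' : ∀ x ∈ s, deriv (deriv μ) x ≤ 0)
    (hh : ∀ x, HasDerivAt h m x) (hm : m < 0) (hh₀ : ∀ x ∈ s, 0 ≤ h x) :
    StrictConcaveOn ℝ s fun x => μ x * h x := by
  have hderiv : deriv (fun x => μ x * h x) = fun x => deriv μ x * h x + μ x * m :=
    funext fun x => ((hμ x).hasDerivAt.mul (hh x)).deriv
  have hderiv2 : ∀ x, deriv^[2] (fun x => μ x * h x) x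
      = deriv (deriv μ) x * h x + 2 * m * deriv μ x := fun x => by
    have h2 : HasDerivAt (fun x => deriv μ x * h x + μ x * m)
        (deriv (deriv μ) x * h x + deriv μ x * m + deriv μ x * m) x :=
      ((hμ₁ x).hasDerivAt.mul (hh x)).add ((hμ x).hasDerivAt.mul_const m)
    rw [Function.iterate_succ_apply, Function.iterate_one, hderiv, h2.deriv]
    ring
  refine strictConcaveOn_of_deriv2_neg' hs
    (hμ.continuous.continuousOn.mul fun x _ => (hh x).continuousAt.continuousWithinAt)
    fun x hx => ?_
  rw [hderiv2]
  nlinarith [mul_nonpos_of_nonpos_of_nonneg (hμ'' x hx) (hh₀ x hx), hμ' x hx]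

theorem HasDerivAt.eventually_neg_nhdsLT {f : ℝ → ℝ} {f' x : ℝ} (hf : HasDerivAt f f' x)
    (hf' : 0 < f') (hx : f x = 0) : ∀ᶠ y in 𝓝[<] x, f y < 0 := by
  filter_upwards [((hasDerivAt_iff_tendsto_slope.mp hf).mono_left (nhdsLT_le_nhdsNE x)).eventually
    (eventually_gt_nhds hf'), self_mem_nhdsWithin] with y hslope hy
  exact neg_of_slope_pos hy hslope hx

theorem StrictConvexOn.neg_of_map_eq_zero {g : ℝ → ℝ} {a b r s : ℝ}
    (hg : StrictConvexOn ℝ (Icc a b) g) (hb : g b ≤ 0) (hr : r ∈ Icc a b) (hgr : g r = 0)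
    (hrs : r < s) (hsb : s < b) : g s < 0 := by
  have hb' : b ∈ Icc a b := ⟨hr.1.trans (hrs.trans hsb).le, le_rfl⟩
  have hs : s ∈ openSegment ℝ r b := by rw [openSegment_eq_Ioo (hrs.trans hsb)]; exact ⟨hrs, hsb⟩
  calc g s < max (g r) (g b) := hg.lt_on_openSegment hr hb' (hrs.trans hsb).ne hs
    _ ≤ 0 := max_le hgr.le hb

theorem StrictConvexOn.existsUnique_zero_Ioo {g : ℝ → ℝ} {a b : ℝ} (hab : a < b)
    (hg : StrictConvexOn ℝ (Icc a b) g) (hcont : ContinuousOn g (Icc a b)) (ha : 0 < g a)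
    (hb : g b ≤ 0) (hneg : ∀ᶠ y in 𝓝[<] b, g y < 0) : ∃! x, x ∈ Ioo a b ∧ g x = 0 := by
  obtain ⟨y, hgy, hy⟩ := (hneg.and (Ioo_mem_nhdsLT hab)).exists
  obtain ⟨x, hx, hgx⟩ := intermediate_value_Ioo' hy.1.le
    (hcont.mono (Icc_subset_Icc_right hy.2.le)) ⟨hgy, ha⟩
  have hx₀ : x ∈ Ioo a b := ⟨hx.1, hx.2.trans hy.2⟩
  refine ⟨x, ⟨hx₀, hgx⟩, fun x' ⟨hx', hgx'⟩ => ?_⟩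
  have hle (r s : ℝ) (hr : r ∈ Ioo a b) (hs : s ∈ Ioo a b) (hgr : g r = 0) (hgs : g s = 0) :
      s ≤ r :=
    not_lt.mp fun hrs => (hg.neg_of_map_eq_zero hb (Ioo_subset_Icc_self hr) hgr hrs hs.2).ne hgs
  exact le_antisymm (hle x x' hx₀ hx' hgx hgx') (hle x' x hx' hx₀ hgx' hgx)

theorem mul_div_eq_div_mul_iff {D K m u v : ℝ} (hD : D ≠ 0) (hK : K ≠ 0) (hm : m ≠ 0) :
    D * u / m = D / K * v ↔ K * u - m * v = 0 := by
  rw [sub_eq_zero]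
  field_simp

/-- `ξ x - δ x = D / (k1 * D1 * μ0 x) * equilibriumGap μ0 (k1 * D1) (S1in - λ1) k0 α0 X0in x`. -/
def equilibriumGap (μ : ℝ → ℝ) (K c k0 α0 X0in x : ℝ) : ℝ :=
  K * (X0in - α0 * x) - μ x * (c + k0 * (X0in - α0 * x))

section equilibriumGap

variable {μ : ℝ → ℝ} {K c k0 α0 X0in : ℝ}

theorem hasDerivAt_equilibriumGap (hμ : Differentiable ℝ μ) (x : ℝ) :
    HasDerivAt (equilibriumGap μ K c k0 α0 X0in)
      (-(K * α0) - deriv μ x * (c + k0 * (X0in - α0 * x)) + μ x * (k0 * α0)) x := by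
  have hu : HasDerivAt (fun y => X0in - α0 * y) (-α0) x := by
    simpa using ((hasDerivAt_id x).const_mul α0).const_sub X0in
  exact (hu.const_mul K).sub ((hμ x).hasDerivAt.mul ((hu.const_mul k0).const_add c))
    |>.congr_deriv (by ring)

theorem equilibriumGap_zero (hμ0 : μ 0 = 0) : equilibriumGap μ K c k0 α0 X0in 0 = K * X0in := by
  simp [equilibriumGap, hμ0]

theorem equilibriumGap_div (hα0 : α0 ≠ 0) :
    equilibriumGap μ K c k0 α0 X0in (X0in / α0) = -(μ (X0in / α0) * c) := by
  simp [equilibriumGap, mul_div_cancel₀ X0in hα0]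

theorem strictConvexOn_equilibriumGap (hμ : Differentiable ℝ μ)
    (hμ₁ : Differentiable ℝ (deriv μ)) (hμ' : ∀ x ∈ Ici (0:ℝ), 0 < deriv μ x)
    (hμ'' : ∀ x ∈ Ici (0:ℝ), deriv (deriv μ) x ≤ 0) (hc : 0 ≤ c) (hk0 : 0 < k0) (hα0 : 0 < α0) :
    StrictConvexOn ℝ (Icc 0 (X0in / α0)) (equilibriumGap μ K c k0 α0 X0in) := by
  have hh : ∀ x, HasDerivAt (fun x => c + k0 * (X0in - α0 * x)) (-(k0 * α0)) x := fun x => by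
    simpa using ((((hasDerivAt_id x).const_mul α0).const_sub X0in).const_mul k0).const_add c
  have hh₀ : ∀ x ∈ Icc 0 (X0in / α0), 0 ≤ c + k0 * (X0in - α0 * x) := fun x hx => by
    have : α0 * x ≤ X0in := (le_div_iff₀' hα0).mp hx.2
    nlinarith
  have hlin : ConvexOn ℝ (Icc 0 (X0in / α0)) fun x => K * (X0in - α0 * x) :=
    (convexOn_const_add_mul (convex_Icc _ _) (K * X0in) (-(K * α0))).congr fun x _ => by ring
  exact hlin.sub_strictConcaveOn
    (strictConcaveOn_mul_of_hasDerivAt (convex_Icc _ _) hμ hμ₁ (fun x hx => hμ' x hx.1)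
      (fun x hx => hμ'' x hx.1) hh (by nlinarith) hh₀)

theorem eventually_equilibriumGap_neg (hμ : Differentiable ℝ μ) (hα0 : 0 < α0)
    (hμb : 0 < μ (X0in / α0)) (hc : 0 ≤ c) (hcond : K < k0 * μ (X0in / α0)) :
    ∀ᶠ y in 𝓝[<] (X0in / α0), equilibriumGap μ K c k0 α0 X0in y < 0 := by
  rcases hc.lt_or_eq with hc | rfl
  · refine eventually_nhdsWithin_of_eventually_nhds
      ((hasDerivAt_equilibriumGap hμ _).continuousAt.eventually_lt continuousAt_const ?_)
    rw [equilibriumGap_div hα0.ne']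
    nlinarith
  · -- when `c = 0` the gap vanishes at `X0in / α0`, but with slope `α0 (k0 μ - K) > 0`
    refine (hasDerivAt_equilibriumGap hμ _).eventually_neg_nhdsLT ?_ (by simp [equilibriumGap_div hα0.ne'])
    rw [mul_div_cancel₀ X0in hα0.ne']
    nlinarith

end equilibriumGap

theorem unique_equilibrium_case2_general
    (μ0 : ℝ → ℝ) (α0 D X0in k0 k1 D1 S1in lam1 : ℝ)
    (hα0 : 0 < α0) (hD : 0 < D) (hX0in : 0 < X0in)
    (hk0 : 0 < k0) (hk1 : 0 < k1) (hD1 : 0 < D1)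
    (hC2 : ContDiff ℝ 2 μ0) (hμ00 : μ0 0 = 0)
    (hμ0' : ∀ x ∈ Ici (0:ℝ), 0 < deriv μ0 x)
    (hμ0'' : ∀ x ∈ Ici (0:ℝ), deriv (deriv μ0) x ≤ 0)
    (ξ δ : ℝ → ℝ)
    (hξ : ∀ x, ξ x = D * (X0in - α0 * x) / μ0 x)
    (hδ : ∀ x, δ x = D / (k1 * D1) * ((S1in - lam1) + k0 * (X0in - α0 * x)))
    (hS1in : lam1 ≤ S1in)
    (hcond : k1 * D1 < k0 * μ0 (X0in / α0)) :
    ∃! x, x ∈ Ioo (0:ℝ) (X0in / α0) ∧ ξ x = δ x := by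
  have hb : 0 < X0in / α0 := div_pos hX0in hα0
  have hμ : Differentiable ℝ μ0 := hC2.differentiable (by norm_num)
  have hμ₁ : Differentiable ℝ (deriv μ0) :=
    ((contDiff_succ_iff_deriv (n := 1)).mp hC2).2.2.differentiable one_ne_zero
  have hμ_pos : ∀ x, 0 < x → 0 < μ0 x := fun x => pos_of_deriv_pos_of_map_zero hμ hμ00 hμ0'
  have hc : 0 ≤ S1in - lam1 := sub_nonneg.mpr hS1in
  have hgap : ∃! x, x ∈ Ioo 0 (X0in / α0) ∧
      equilibriumGap μ0 (k1 * D1) (S1in - lam1) k0 α0 X0in x = 0 :=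
    (strictConvexOn_equilibriumGap hμ hμ₁ hμ0' hμ0'' hc hk0 hα0).existsUnique_zero_Ioo hb
      (fun x _ => (hasDerivAt_equilibriumGap hμ x).continuousAt.continuousWithinAt)
      (by rw [equilibriumGap_zero hμ00]; positivity)
      (by rw [equilibriumGap_div hα0.ne']; exact neg_nonpos.mpr (mul_nonneg (hμ_pos _ hb).le hc))
      (eventually_equilibriumGap_neg hμ hα0 (hμ_pos _ hb) hc hcond)
  refine (existsUnique_congr fun x => and_congr_right fun hx => ?_).mpr hgap
  rw [hξ, hδ]
  exact mul_div_eq_div_mul_iff hD.ne' (by positivity) (hμ_pos x hx.1).ne'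

theorem unique_equilibrium_case2
    (μ0 : ℝ → ℝ) (α0 D X0in k0 k1 D1 S1in lam1 : ℝ)
    (hα0 : 0 < α0) (hD : 0 < D) (hX0in : 0 < X0in)
    (hk0 : 0 < k0) (hk1 : 0 < k1) (hD1 : 0 < D1) (hlam1 : 0 < lam1)
    (hC2 : ContDiff ℝ 2 μ0) (hμ00 : μ0 0 = 0)
    (hμ0' : ∀ x ∈ Ici (0:ℝ), 0 < deriv μ0 x)
    (hμ0'' : ∀ x ∈ Ici (0:ℝ), deriv (deriv μ0) x ≤ 0)
    (ξ δ : ℝ → ℝ)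
    (hξ : ∀ x, ξ x = D * (X0in - α0 * x) / μ0 x)
    (hδ : ∀ x, δ x = D / (k1 * D1) * ((S1in - lam1) + k0 * (X0in - α0 * x)))
    (hS1in : lam1 ≤ S1in)
    (hcond : k1 * D1 < k0 * μ0 (X0in / α0)) :
    ∃! x, x ∈ Ioo (0:ℝ) (X0in / α0) ∧ ξ x = δ x :=
  unique_equilibrium_case2_general μ0 α0 D X0in k0 k1 D1 S1in lam1 hα0 hD hX0in hk0 hk1 hD1 hC2 hμ00
    hμ0' hμ0'' ξ δ hξ hδ hS1in hcond
end
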